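/- Fix data points x_1,…,x_n ∈ ℝ^d and k ≥ 1, and let K be a compact subset of (ℝ^d)^k. Let σ_m > 0 with σ_m → 0, and for each m let μ^{(m)} ∈ K be a minimizer of L_{σ_m} over K (i.e. L_{σ_m}(μ^{(m)}) ≤ L_{σ_m}(ν) for all ν ∈ K). If μ^{(m)} converges to some μ̄ ∈ K (along the full sequence or a subsequence), then μ̄ minimizes the K-Means distortion J over K: J(μ̄) ≤ J(ν) for all ν ∈ K. -/

import Mathlib

/-!
The soft loss of a configuration is a convex combination of the squared distances, so it
dominates the hard distortion `J`; conversely the Gibbs weight of a centre whose squared distance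
exceeds the minimum by `t` is at most `exp (-t / 2σ²)`, and `t * exp (-t / 2σ²) ≤ 2σ²`, so
`L_σ ≤ J + 2nkσ²`. Hence `L_σ → J` pointwise from above as `σ → 0`. Along the subsequence,
`J (μ⁽ᵐ⁾) ≤ L_{σ_m} (μ⁽ᵐ⁾) ≤ L_{σ_m} (ν)`, where the left side tends to `J (μ̄)` by continuity of
`J` and the right side to `J (ν)`.
-/

open Filter

/-- The soft RBF loss `L_σ(μ)`. -/
noncomputable def softLoss (d n k : ℕ) (x : Fin n → EuclideanSpace ℝ (Fin d))
    (σ : ℝ) (μ : Fin k → EuclideanSpace ℝ (Fin d)) : ℝ :=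
  ∑ i, ∑ j,
    (Real.exp (-‖x i - μ j‖ ^ 2 / (2 * σ ^ 2)) /
      ∑ ℓ, Real.exp (-‖x i - μ ℓ‖ ^ 2 / (2 * σ ^ 2))) * ‖x i - μ j‖ ^ 2

/-- The K-Means distortion `J(μ)`. -/
noncomputable def distortion (d n k : ℕ) (x : Fin n → EuclideanSpace ℝ (Fin d))
    (μ : Fin k → EuclideanSpace ℝ (Fin d)) : ℝ :=
  ∑ i, ⨅ j : Fin k, ‖x i - μ j‖ ^ 2

open Real Finset Topology

theorem isMinOn_of_tendsto_of_isMinOn {α X : Type*} [TopologicalSpace X] {l : Filter α} [l.NeBot]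
    {J : X → ℝ} {L : α → X → ℝ} {K : Set X} {μ : α → X} {μbar : X}
    (hJ : ContinuousAt J μbar) (hle : ∀ a, J (μ a) ≤ L a (μ a))
    (hlim : ∀ ν ∈ K, Tendsto (fun a => L a ν) l (𝓝 (J ν)))
    (hmin : ∀ a, IsMinOn (L a) K (μ a)) (hconv : Tendsto μ l (𝓝 μbar)) :
    IsMinOn J K μbar :=
  isMinOn_iff.2 fun ν hν =>
    le_of_tendsto_of_tendsto' (hJ.tendsto.comp hconv) (hlim ν hν) fun a =>
      (hle a).trans (isMinOn_iff.1 (hmin a) ν hν)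

theorem continuous_ciInf_of_fintype {X ι : Type*} [TopologicalSpace X] [Fintype ι] [Nonempty ι]
    {f : ι → X → ℝ} (hf : ∀ j, Continuous (f j)) : Continuous fun y => ⨅ j, f j y := by
  simp_rw [← inf'_univ_eq_ciInf]
  exact Continuous.finset_inf'_apply _ fun j _ => hf j

theorem mul_exp_neg_div_le {T : ℝ} (hT : 0 < T) (t : ℝ) : t * exp (-t / T) ≤ T := by
  have h := (mul_exp_neg_le_exp_neg_one (t / T)).trans (exp_le_one_iff.2 (by norm_num))
  rwa [div_mul_eq_mul_div, div_le_one hT, ← neg_div] at h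

section Gibbs

variable {ι : Type*} [Fintype ι]

noncomputable def gibbsWeight (T : ℝ) (D : ι → ℝ) (j : ι) : ℝ :=
  exp (-D j / T) / ∑ l, exp (-D l / T)

noncomputable def gibbsMean (T : ℝ) (D : ι → ℝ) : ℝ :=
  ∑ j, gibbsWeight T D j * D j

theorem gibbsWeight_nonneg (T : ℝ) (D : ι → ℝ) (j : ι) : 0 ≤ gibbsWeight T D j :=
  div_nonneg (exp_pos _).le (sum_nonneg fun _ _ => (exp_pos _).le)

variable [Nonempty ι]

theorem sum_gibbsWeight (T : ℝ) (D : ι → ℝ) : ∑ j, gibbsWeight T D j = 1 := by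
  simp_rw [gibbsWeight]
  rw [← sum_div, div_self (sum_pos (fun _ _ => exp_pos _) univ_nonempty).ne']

theorem gibbsWeight_le_exp (T : ℝ) (D : ι → ℝ) (j : ι) :
    gibbsWeight T D j ≤ exp (-(D j - ⨅ l, D l) / T) := by
  obtain ⟨j₀, hj₀⟩ := exists_eq_ciInf_of_finite (f := D)
  have hS : 0 < ∑ l, exp (-D l / T) := sum_pos (fun _ _ => exp_pos _) univ_nonempty
  rw [gibbsWeight, div_le_iff₀ hS]
  calc exp (-D j / T) = exp (-(D j - ⨅ l, D l) / T) * exp (-D j₀ / T) := by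
        rw [← exp_add, hj₀]; ring_nf
    _ ≤ exp (-(D j - ⨅ l, D l) / T) * ∑ l, exp (-D l / T) := by
        gcongr
        exact single_le_sum (f := fun l => exp (-D l / T)) (fun _ _ => (exp_pos _).le)
          (mem_univ j₀)

theorem iInf_le_gibbsMean (T : ℝ) (D : ι → ℝ) : ⨅ j, D j ≤ gibbsMean T D :=
  calc ⨅ j, D j = ∑ j, gibbsWeight T D j * ⨅ l, D l := by
        rw [← sum_mul, sum_gibbsWeight, one_mul]
    _ ≤ gibbsMean T D := sum_le_sum fun j _ =>
        mul_le_mul_of_nonneg_left (ciInf_le (Finite.bddBelow_range D) j)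
          (gibbsWeight_nonneg T D j)

theorem gibbsMean_le_iInf_add {T : ℝ} (hT : 0 < T) (D : ι → ℝ) :
    gibbsMean T D ≤ (⨅ j, D j) + Fintype.card ι * T := by
  set m := ⨅ j, D j
  have hexcess : ∀ j, gibbsWeight T D j * (D j - m) ≤ T := fun j =>
    calc gibbsWeight T D j * (D j - m) ≤ (D j - m) * exp (-(D j - m) / T) := by
          rw [mul_comm]
          exact mul_le_mul_of_nonneg_left (gibbsWeight_le_exp T D j)
            (sub_nonneg.2 (ciInf_le (Finite.bddBelow_range D) j))
      _ ≤ T := mul_exp_neg_div_le hT _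
  calc gibbsMean T D = m + ∑ j, gibbsWeight T D j * (D j - m) := by
        simp only [gibbsMean, mul_sub, sum_sub_distrib, ← sum_mul, sum_gibbsWeight]
        ring
    _ ≤ m + ∑ _j : ι, T := by gcongr with j; exact hexcess j
    _ = m + Fintype.card ι * T := by rw [sum_const, card_univ, nsmul_eq_mul]

end Gibbs

section KMeans

variable {d n k : ℕ} (x : Fin n → EuclideanSpace ℝ (Fin d))

theorem softLoss_eq_sum_gibbsMean (σ : ℝ) (μ : Fin k → EuclideanSpace ℝ (Fin d)) :
    softLoss d n k x σ μ = ∑ i, gibbsMean (2 * σ ^ 2) fun j => ‖x i - μ j‖ ^ 2 :=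
  rfl

variable [NeZero k]

theorem distortion_le_softLoss (σ : ℝ) (μ : Fin k → EuclideanSpace ℝ (Fin d)) :
    distortion d n k x μ ≤ softLoss d n k x σ μ := by
  rw [softLoss_eq_sum_gibbsMean]
  exact sum_le_sum fun i _ => iInf_le_gibbsMean _ _

theorem softLoss_le_distortion_add {σ : ℝ} (hσ : σ ≠ 0) (μ : Fin k → EuclideanSpace ℝ (Fin d)) :
    softLoss d n k x σ μ ≤ distortion d n k x μ + n * (k * (2 * σ ^ 2)) := by
  have hT : 0 < 2 * σ ^ 2 := by positivity
  calc softLoss d n k x σ μ ≤ ∑ i : Fin n, ((⨅ j, ‖x i - μ j‖ ^ 2) + k * (2 * σ ^ 2)) := by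
        rw [softLoss_eq_sum_gibbsMean]
        exact sum_le_sum fun i _ => by
          simpa using gibbsMean_le_iInf_add hT fun j => ‖x i - μ j‖ ^ 2
    _ = distortion d n k x μ + n * (k * (2 * σ ^ 2)) := by
        rw [sum_add_distrib, sum_const, card_univ, Fintype.card_fin, nsmul_eq_mul, distortion]

theorem tendsto_softLoss_distortion (μ : Fin k → EuclideanSpace ℝ (Fin d)) :
    Tendsto (fun σ => softLoss d n k x σ μ) (𝓝[≠] 0)
      (𝓝 (distortion d n k x μ)) := by
  have hupper : Tendsto (fun σ : ℝ => distortion d n k x μ + n * (k * (2 * σ ^ 2)))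
      (𝓝[≠] 0) (𝓝 (distortion d n k x μ)) := by
    have : Continuous fun σ : ℝ => distortion d n k x μ + n * (k * (2 * σ ^ 2)) := by fun_prop
    simpa using (this.tendsto 0).mono_left nhdsWithin_le_nhds
  exact tendsto_of_tendsto_of_tendsto_of_le_of_le' tendsto_const_nhds hupper
    (.of_forall (distortion_le_softLoss x · μ))
    (eventually_nhdsWithin_of_forall fun σ hσ => softLoss_le_distortion_add x hσ μ)

theorem continuous_distortion : Continuous (distortion d n k x) :=
  continuous_finsetSum _ fun i _ => continuous_ciInf_of_fintype fun j : Fin k => by fun_prop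

end KMeans

theorem minimizers_converge_to_kmeans_minimizer_general
    (d n k : ℕ) (hk : 1 ≤ k)
    (x : Fin n → EuclideanSpace ℝ (Fin d))
    (K : Set (Fin k → EuclideanSpace ℝ (Fin d)))
    (σ : ℕ → ℝ) (hσpos : ∀ m, 0 < σ m) (hσ : Tendsto σ atTop (nhds 0))
    (μseq : ℕ → Fin k → EuclideanSpace ℝ (Fin d))
    (hmin : ∀ m, ∀ ν ∈ K, softLoss d n k x (σ m) (μseq m) ≤ softLoss d n k x (σ m) ν)
    (φ : ℕ → ℕ) (hφ : StrictMono φ)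
    (μbar : Fin k → EuclideanSpace ℝ (Fin d))
    (hconv : Tendsto (fun m => μseq (φ m)) atTop (nhds μbar)) :
    ∀ ν ∈ K, distortion d n k x μbar ≤ distortion d n k x ν := by
  have : NeZero k := ⟨by omega⟩
  have hσφ : Tendsto (σ ∘ φ) atTop (𝓝[≠] 0) :=
    tendsto_nhdsWithin_iff.2
      ⟨hσ.comp hφ.tendsto_atTop, .of_forall fun m => (hσpos (φ m)).ne'⟩
  refine isMinOn_iff.1 <| isMinOn_of_tendsto_of_isMinOn
    (L := fun m => softLoss d n k x (σ (φ m))) (continuous_distortion x).continuousAt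
    (fun m => distortion_le_softLoss x _ _) (fun ν _ => ?_)
    (fun m => isMinOn_iff.2 (hmin (φ m))) hconv
  exact (tendsto_softLoss_distortion x ν).comp hσφ

/-- Convergence of minimizers on a compact constraint set: if
`σ_m → 0⁺`, each `μ^{(m)}` minimizes `L_{σ_m}` over a compact set `K`, and
(a subsequence of) `μ^{(m)}` converges to `μ̄ ∈ K`, then `μ̄` minimizes the
K-Means distortion `J` over `K`. -/
theorem minimizers_converge_to_kmeans_minimizer
    (d n k : ℕ) (hk : 1 ≤ k)
    (x : Fin n → EuclideanSpace ℝ (Fin d))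
    (K : Set (Fin k → EuclideanSpace ℝ (Fin d))) (hK : IsCompact K)
    (σ : ℕ → ℝ) (hσpos : ∀ m, 0 < σ m) (hσ : Tendsto σ atTop (nhds 0))
    (μseq : ℕ → Fin k → EuclideanSpace ℝ (Fin d))
    (hmem : ∀ m, μseq m ∈ K)
    (hmin : ∀ m, ∀ ν ∈ K, softLoss d n k x (σ m) (μseq m) ≤ softLoss d n k x (σ m) ν)
    (φ : ℕ → ℕ) (hφ : StrictMono φ)
    (μbar : Fin k → EuclideanSpace ℝ (Fin d)) (hbar : μbar ∈ K)
    (hconv : Tendsto (fun m => μseq (φ m)) atTop (nhds μbar)) :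
    ∀ ν ∈ K, distortion d n k x μbar ≤ distortion d n k x ν :=
  minimizers_converge_to_kmeans_minimizer_general d n k hk x K σ hσpos hσ μseq hmin φ hφ μbar hconv
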